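/- (CoSaMP error bound.) Let A be an n×N real matrix satisfying aRIP(2k; L₂, U₂), aRIP(3k; L₃, U₃), and aRIP(4k; L₄, U₄) with L₂ < 1 and L₃ < 1. Define μ := (1/2)·(2 + (L₄+U₄)/(1−L₃))·((L₂+U₂+L₄+U₄)/(1−L₂)) and ξ := 2·[(2 + (L₄+U₄)/(1−L₃))·(√(1+U₂)/(1−L₂)) + (1−L₃)^{−1/2}], and assume μ < 1. Let x ∈ ℝ^N be k-sparse, let e ∈ ℝⁿ, and set y = Ax + e. Consider any CoSaMP trajectory: v⁰ := 0, and for each l ≥ 1: Ω^l is an index set with |Ω^l| = 2k selecting 2k largest-magnitude entries of A*(y − A v^{l−1}); T̃^l := supp(v^{l−1}) ∪ Ω^l; x̃^l ∈ ℝ^N is the vector supported in T̃^l whose restriction to T̃^l equals A_{T̃^l}† y; T^l is an index set with |T^l| = k selecting k largest-magnitude entries of x̃^l; and v^l := (x̃^l)_{T^l}. Then for every l ≥ 0, ‖x − v^l‖₂ ≤ μ^l·‖x‖₂ + (ξ/(1−μ))·‖e‖₂. -/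

import Mathlib

open Finset Matrix

noncomputable def enormR {α : Type*} [Fintype α] (v : α → ℝ) : ℝ :=
  Real.sqrt (∑ i, (v i) ^ 2)

def restr {N : ℕ} (I : Finset (Fin N)) (x : Fin N → ℝ) : Fin N → ℝ :=
  fun i => if i ∈ I then x i else 0

def sparse {N : ℕ} (k : ℕ) (x : Fin N → ℝ) : Prop :=
  (Finset.univ.filter fun i => x i ≠ 0).card ≤ k

def aRIP {n N : ℕ} (A : Matrix (Fin n) (Fin N) ℝ) (m : ℕ) (L U : ℝ) : Prop :=
  ∀ x : Fin N → ℝ, sparse m x →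
    (1 - L) * enormR x ^ 2 ≤ enormR (A.mulVec x) ^ 2 ∧
      enormR (A.mulVec x) ^ 2 ≤ (1 + U) * enormR x ^ 2

def selects {N : ℕ} (T : Finset (Fin N)) (v : Fin N → ℝ) : Prop :=
  ∀ i ∈ T, ∀ j ∉ T, |v j| ≤ |v i|

def subCols {n N : ℕ} (A : Matrix (Fin n) (Fin N) ℝ) (I : Finset (Fin N)) :
    Matrix (Fin n) I ℝ :=
  fun r c => A r (c : Fin N)

noncomputable def gram {n N : ℕ} (A : Matrix (Fin n) (Fin N) ℝ) (I : Finset (Fin N)) :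
    Matrix I I ℝ :=
  (subCols A I)ᵀ * subCols A I

noncomputable def pinvApply {n N : ℕ} (A : Matrix (Fin n) (Fin N) ℝ) (I : Finset (Fin N))
    (y : Fin n → ℝ) : I → ℝ :=
  ((gram A I)⁻¹ * (subCols A I)ᵀ).mulVec y

noncomputable def pinvVec {n N : ℕ} (A : Matrix (Fin n) (Fin N) ℝ) (I : Finset (Fin N))
    (y : Fin n → ℝ) : Fin N → ℝ :=
  fun i => if h : i ∈ I then pinvApply A I y ⟨i, h⟩ else 0

/-!
Each CoSaMP iteration contracts the error `r = x - v` by the factor `μ`, up to `ξ ‖e‖`.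
The basic RIP estimate is `|⟪A u, A w⟫| ≤ (L + U)/2 ‖u‖ ‖w‖` for disjointly supported `u, w`.
*Identification*: as `Ω` carries the `2k` largest entries of the proxy `Aᵀ (A r + e)`, the entries
of the proxy on `supp r \ Ω` are dominated by those on `Ω \ supp r`, which bounds `‖r‖` off `Ω`.
*Estimation*: the least-squares solution `x̃` on `T̃` leaves a residual orthogonal to the columns
in `T̃`, so `‖x - x̃‖` is controlled by the part of `x` outside `T̃ ⊇ Ω`.
*Pruning*: keeping the `k` largest entries of `x̃` is a best `k`-sparse approximation of `x̃`,
so it at most doubles the distance to `x`.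
Iterating `‖x - v^{l+1}‖ ≤ μ ‖x - v^l‖ + ξ ‖e‖` gives the bound.
-/

section EuclideanNorm

variable {α : Type*} [Fintype α]

lemma enormR_eq_norm (v : α → ℝ) : enormR v = ‖WithLp.toLp 2 v‖ := by
  simp [enormR, EuclideanSpace.norm_eq]

lemma enormR_nonneg (v : α → ℝ) : 0 ≤ enormR v := Real.sqrt_nonneg _

lemma enormR_sq (v : α → ℝ) : enormR v ^ 2 = ∑ i, v i ^ 2 :=
  Real.sq_sqrt (sum_nonneg fun _ _ => sq_nonneg _)

lemma enormR_sq_eq_dotProduct (v : α → ℝ) : enormR v ^ 2 = v ⬝ᵥ v := by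
  rw [enormR_sq]; simp only [dotProduct, sq]

@[simp] lemma enormR_zero : enormR (0 : α → ℝ) = 0 := by
  simp [enormR]

lemma enormR_eq_zero {v : α → ℝ} : enormR v = 0 ↔ v = 0 := by
  simp [enormR_eq_norm]

lemma enormR_le_of_sq_le {u w : α → ℝ} (h : ∀ i, u i ^ 2 ≤ w i ^ 2) : enormR u ≤ enormR w :=
  Real.sqrt_le_sqrt (sum_le_sum fun i _ => h i)

lemma enormR_add_le (u w : α → ℝ) : enormR (u + w) ≤ enormR u + enormR w := by
  simpa [enormR_eq_norm] using norm_add_le (WithLp.toLp 2 u : EuclideanSpace ℝ α) (WithLp.toLp 2 w)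

lemma enormR_neg (v : α → ℝ) : enormR (-v) = enormR v := by
  simp [enormR]

lemma enormR_sub_comm (u w : α → ℝ) : enormR (u - w) = enormR (w - u) := by
  rw [← neg_sub, enormR_neg]

lemma abs_dotProduct_le (u w : α → ℝ) : |u ⬝ᵥ w| ≤ enormR u * enormR w := by
  simpa [enormR_eq_norm, EuclideanSpace.inner_toLp_toLp, dotProduct_comm] using
    abs_real_inner_le_norm (WithLp.toLp 2 u : EuclideanSpace ℝ α) (WithLp.toLp 2 w)

lemma dotProduct_le_enormR_mul (u w : α → ℝ) : u ⬝ᵥ w ≤ enormR u * enormR w :=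
  (le_abs_self _).trans (abs_dotProduct_le u w)

end EuclideanNorm

lemma le_of_sq_le_mul {a b : ℝ} (hb : 0 ≤ b) (h : a ^ 2 ≤ a * b) : a ≤ b := by
  nlinarith

section Support

variable {N : ℕ}

noncomputable def supp (x : Fin N → ℝ) : Finset (Fin N) := univ.filter fun i => x i ≠ 0

lemma mem_supp {x : Fin N → ℝ} {i : Fin N} : i ∈ supp x ↔ x i ≠ 0 := by
  simp [supp]

lemma sparse_iff_card_supp_le {k : ℕ} {x : Fin N → ℝ} : sparse k x ↔ (supp x).card ≤ k := Iff.rfl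

lemma supp_subset_iff {x : Fin N → ℝ} {I : Finset (Fin N)} :
    supp x ⊆ I ↔ ∀ i ∉ I, x i = 0 := by
  simp only [Finset.subset_iff, mem_supp]
  exact ⟨fun h i hi => by_contra fun hx => hi (h hx), fun h i hx => by_contra fun hi => hx (h i hi)⟩

lemma supp_restr (I : Finset (Fin N)) (x : Fin N → ℝ) : supp (restr I x) = supp x ∩ I := by
  ext i; by_cases h : i ∈ I <;> simp [mem_supp, restr, h]

lemma supp_restr_subset (I : Finset (Fin N)) (x : Fin N → ℝ) : supp (restr I x) ⊆ I :=
  supp_restr I x ▸ inter_subset_right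

lemma supp_restr_subset_supp (I : Finset (Fin N)) (x : Fin N → ℝ) : supp (restr I x) ⊆ supp x :=
  supp_restr I x ▸ inter_subset_left

lemma supp_smul_add_smul_subset (a b : ℝ) (u w : Fin N → ℝ) :
    supp (a • u + b • w) ⊆ supp u ∪ supp w :=
  supp_subset_iff.2 fun i hi => by
    simp only [mem_union, not_or, mem_supp, not_not] at hi
    simp [hi.1, hi.2]

lemma supp_sub_subset (u w : Fin N → ℝ) : supp (u - w) ⊆ supp u ∪ supp w := by
  simpa [sub_eq_add_neg] using supp_smul_add_smul_subset 1 (-1) u w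

lemma dotProduct_eq_zero_of_disjoint {u w : Fin N → ℝ} (h : Disjoint (supp u) (supp w)) :
    u ⬝ᵥ w = 0 := by
  refine sum_eq_zero fun i _ => ?_
  by_cases hi : i ∈ supp u
  · simp [mem_supp.not_left.1 (disjoint_left.1 h hi)]
  · simp [mem_supp.not_left.1 hi]

lemma restr_add_restr_compl (I : Finset (Fin N)) (x : Fin N → ℝ) :
    restr I x + restr Iᶜ x = x := by
  ext i; by_cases h : i ∈ I <;> simp [restr, h]

lemma enormR_sq_restr (I : Finset (Fin N)) (x : Fin N → ℝ) :
    enormR (restr I x) ^ 2 = ∑ i ∈ I, x i ^ 2 := by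
  simp [enormR_sq, restr, ite_pow, sum_ite_mem]

lemma enormR_restr_le (I : Finset (Fin N)) (x : Fin N → ℝ) : enormR (restr I x) ≤ enormR x :=
  enormR_le_of_sq_le fun i => by by_cases h : i ∈ I <;> simp [restr, h, sq_nonneg]

lemma dotProduct_restr_of_supp_subset {p : Fin N → ℝ} {S : Finset (Fin N)} (h : supp p ⊆ S)
    (u : Fin N → ℝ) : p ⬝ᵥ restr S u = p ⬝ᵥ u := by
  refine sum_congr rfl fun i _ => ?_
  by_cases hi : i ∈ S
  · simp [restr, hi]
  · simp [supp_subset_iff.1 h i hi]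

end Support

section Selection

variable {N : ℕ}

lemma sum_sq_sdiff_le_of_selects {S T : Finset (Fin N)} {u : Fin N → ℝ} (hsel : selects T u)
    (hcard : S.card ≤ T.card) : ∑ i ∈ S \ T, u i ^ 2 ≤ ∑ i ∈ T \ S, u i ^ 2 := by
  have hsdiff : (S \ T).card ≤ (T \ S).card := by
    have := card_sdiff_add_card_inter S T
    have := card_sdiff_add_card_inter T S
    rw [inter_comm] at this
    omega
  rcases (T \ S).eq_empty_or_nonempty with hTS | hTS
  · rw [hTS, card_empty, Nat.le_zero, card_eq_zero] at hsdiff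
    simp [hsdiff, hTS]
  -- every entry selected in `T \ S` dominates every entry left out in `S \ T`
  set c := (T \ S).inf' hTS fun i => u i ^ 2
  have hc : 0 ≤ c := le_inf' _ _ fun i _ => sq_nonneg _
  have hle : ∀ j ∈ S \ T, u j ^ 2 ≤ c := fun j hj => le_inf' _ _ fun i hi =>
    sq_le_sq.2 (hsel i (mem_sdiff.1 hi).1 j (mem_sdiff.1 hj).2)
  calc ∑ i ∈ S \ T, u i ^ 2 ≤ (S \ T).card • c := sum_le_card_nsmul _ _ _ hle
    _ ≤ (T \ S).card • c := nsmul_le_nsmul_left hc hsdiff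
    _ ≤ ∑ i ∈ T \ S, u i ^ 2 := card_nsmul_le_sum _ _ _ fun i hi => inf'_le _ hi

lemma sum_sq_le_of_selects {S T : Finset (Fin N)} {u : Fin N → ℝ} (hsel : selects T u)
    (hcard : S.card ≤ T.card) : ∑ i ∈ S, u i ^ 2 ≤ ∑ i ∈ T, u i ^ 2 := by
  rw [← sum_inter_add_sum_sdiff S T, ← sum_inter_add_sum_sdiff T S, inter_comm]
  exact add_le_add_right (sum_sq_sdiff_le_of_selects hsel hcard) _

lemma enormR_sub_restr_le_of_selects {T : Finset (Fin N)} {u z : Fin N → ℝ} (hsel : selects T u)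
    (hz : (supp z).card ≤ T.card) : enormR (u - restr T u) ≤ enormR (u - z) := by
  have hcompl : ∀ I : Finset (Fin N),
      enormR (u - restr I u) ^ 2 = ∑ i, u i ^ 2 - ∑ i ∈ I, u i ^ 2 := by
    intro I
    rw [← eq_sub_of_add_eq' (restr_add_restr_compl I u), enormR_sq_restr, ← sum_compl_add_sum I]
    ring
  have hSz : u - restr (supp z) u = restr (supp z)ᶜ (u - z) := by
    ext i
    by_cases hi : i ∈ supp z
    · simp [restr, hi]
    · simp [restr, hi, mem_supp.not_left.1 hi]
  rw [← sq_le_sq₀ (enormR_nonneg _) (enormR_nonneg _)]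
  calc enormR (u - restr T u) ^ 2 ≤ enormR (u - restr (supp z) u) ^ 2 := by
        rw [hcompl, hcompl]
        linarith [sum_sq_le_of_selects hsel hz]
    _ ≤ enormR (u - z) ^ 2 := by
        rw [hSz]
        gcongr
        · exact enormR_nonneg _
        · exact enormR_restr_le _ _

lemma enormR_sub_restr_le_two_mul_of_selects {T : Finset (Fin N)} {u x : Fin N → ℝ}
    (hsel : selects T u) (hx : (supp x).card ≤ T.card) :
    enormR (x - restr T u) ≤ 2 * enormR (x - u) :=
  calc enormR (x - restr T u) = enormR ((x - u) + (u - restr T u)) := by rw [sub_add_sub_cancel]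
    _ ≤ enormR (x - u) + enormR (u - x) :=
        (enormR_add_le _ _).trans (add_le_add_right (enormR_sub_restr_le_of_selects hsel hx) _)
    _ = 2 * enormR (x - u) := by rw [enormR_sub_comm u x]; ring

end Selection

section RIP

variable {n N m : ℕ} {A : Matrix (Fin n) (Fin N) ℝ} {L U : ℝ}

lemma aRIP.sqrt_mul_enormR_le (h : aRIP A m L U) {w : Fin N → ℝ} (hw : sparse m w) :
    Real.sqrt (1 - L) * enormR w ≤ enormR (A *ᵥ w) :=
  calc Real.sqrt (1 - L) * enormR w = Real.sqrt ((1 - L) * enormR w ^ 2) := by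
        rw [Real.sqrt_mul' _ (sq_nonneg _), Real.sqrt_sq (enormR_nonneg _)]
    _ ≤ Real.sqrt (enormR (A *ᵥ w) ^ 2) := Real.sqrt_le_sqrt (h w hw).1
    _ = enormR (A *ᵥ w) := Real.sqrt_sq (enormR_nonneg _)

lemma aRIP.enormR_mulVec_le (h : aRIP A m L U) {w : Fin N → ℝ} (hw : sparse m w) :
    enormR (A *ᵥ w) ≤ Real.sqrt (1 + U) * enormR w :=
  calc enormR (A *ᵥ w) = Real.sqrt (enormR (A *ᵥ w) ^ 2) := (Real.sqrt_sq (enormR_nonneg _)).symm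
    _ ≤ Real.sqrt ((1 + U) * enormR w ^ 2) := Real.sqrt_le_sqrt (h w hw).2
    _ = Real.sqrt (1 + U) * enormR w := by
        rw [Real.sqrt_mul' _ (sq_nonneg _), Real.sqrt_sq (enormR_nonneg _)]

lemma aRIP.eq_zero_of_mulVec_eq_zero (h : aRIP A m L U) (hL : L < 1) {w : Fin N → ℝ}
    (hw : sparse m w) (hAw : A *ᵥ w = 0) : w = 0 := by
  have hlow := (h w hw).1
  rw [hAw, enormR_zero] at hlow
  have hsq : enormR w ^ 2 ≤ 0 := by nlinarith [sub_pos.2 hL, sq_nonneg (enormR w)]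
  exact enormR_eq_zero.1 (pow_eq_zero_iff two_ne_zero |>.1 (le_antisymm hsq (sq_nonneg _)))

/-- Polarization: `4ab ⟪Au, Aw⟫ = ‖A(bu + aw)‖² - ‖A(bu - aw)‖²` with `a = ‖u‖`, `b = ‖w‖`, and
both `bu ± aw` have squared norm `2a²b²`. -/
lemma aRIP.abs_dotProduct_mulVec_le (h : aRIP A m L U) {u w : Fin N → ℝ}
    (hdisj : Disjoint (supp u) (supp w)) (hcard : (supp u ∪ supp w).card ≤ m) :
    |(A *ᵥ u) ⬝ᵥ (A *ᵥ w)| ≤ (L + U) / 2 * enormR u * enormR w := by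
  rcases (enormR_nonneg u).eq_or_lt with ha | ha
  · simp [enormR_eq_zero.1 ha.symm]
  rcases (enormR_nonneg w).eq_or_lt with hb | hb
  · simp [enormR_eq_zero.1 hb.symm]
  set a := enormR u
  set b := enormR w
  have hsparse : ∀ c : ℝ, sparse m (b • u + c • w) := fun c =>
    (card_le_card (supp_smul_add_smul_subset _ _ _ _)).trans hcard
  have hnorm : ∀ c : ℝ, enormR (b • u + c • w) ^ 2 = b ^ 2 * a ^ 2 + c ^ 2 * b ^ 2 := by
    intro c
    simp only [enormR_sq_eq_dotProduct, add_dotProduct, dotProduct_add, smul_dotProduct,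
      dotProduct_smul, smul_eq_mul, dotProduct_comm w u, dotProduct_eq_zero_of_disjoint hdisj]
    rw [← enormR_sq_eq_dotProduct u, ← enormR_sq_eq_dotProduct w]
    ring
  have hAnorm : ∀ c : ℝ, enormR (A *ᵥ (b • u + c • w)) ^ 2 =
      b ^ 2 * enormR (A *ᵥ u) ^ 2 + 2 * b * c * ((A *ᵥ u) ⬝ᵥ (A *ᵥ w))
        + c ^ 2 * enormR (A *ᵥ w) ^ 2 := by
    intro c
    simp only [enormR_sq_eq_dotProduct, mulVec_add, mulVec_smul, add_dotProduct, dotProduct_add,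
      smul_dotProduct, dotProduct_smul, smul_eq_mul, dotProduct_comm (A *ᵥ w) (A *ᵥ u)]
    ring
  have hs := h _ (hsparse a)
  have hd := h _ (hsparse (-a))
  rw [hAnorm, hnorm] at hs hd
  have hab := mul_pos ha hb
  rw [abs_le]
  constructor <;> nlinarith [hs.1, hs.2, hd.1, hd.2]

lemma enormR_restr_transpose_mulVec_le {S : Finset (Fin N)} {z : Fin n → ℝ} {C : ℝ} (hC0 : 0 ≤ C)
    (hC : ∀ w : Fin N → ℝ, supp w ⊆ S → (A *ᵥ w) ⬝ᵥ z ≤ C * enormR w) :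
    enormR (restr S (Aᵀ *ᵥ z)) ≤ C := by
  set g := restr S (Aᵀ *ᵥ z)
  refine le_of_sq_le_mul hC0 ?_
  calc enormR g ^ 2 = (A *ᵥ g) ⬝ᵥ z := by
        rw [enormR_sq_eq_dotProduct, dotProduct_restr_of_supp_subset (supp_restr_subset _ _),
          dotProduct_transpose_mulVec, dotProduct_comm]
    _ ≤ C * enormR g := hC g (supp_restr_subset _ _)
    _ = enormR g * C := mul_comm _ _

end RIP

section LeastSquares

variable {n N m : ℕ} {A : Matrix (Fin n) (Fin N) ℝ} {L U : ℝ} {I : Finset (Fin N)}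

def extendByZero (I : Finset (Fin N)) (z : I → ℝ) : Fin N → ℝ :=
  fun i => if h : i ∈ I then z ⟨i, h⟩ else 0

lemma pinvVec_eq_extendByZero (A : Matrix (Fin n) (Fin N) ℝ) (I : Finset (Fin N)) (y : Fin n → ℝ) :
    pinvVec A I y = extendByZero I (pinvApply A I y) := rfl

lemma supp_extendByZero_subset (z : I → ℝ) : supp (extendByZero I z) ⊆ I :=
  supp_subset_iff.2 fun _ hi => dif_neg hi

@[simp] lemma extendByZero_zero : extendByZero I (0 : I → ℝ) = 0 := by
  ext i; simp [extendByZero]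

lemma extendByZero_injective : Function.Injective (extendByZero (N := N) I) :=
  fun z z' h => funext fun j => by simpa [extendByZero] using congrFun h j

lemma subCols_mulVec (z : I → ℝ) : subCols A I *ᵥ z = A *ᵥ extendByZero I z := by
  ext r
  simp only [mulVec, dotProduct, subCols, extendByZero, mul_dite, mul_zero]
  rw [← sum_subset (subset_univ I) (fun i _ hi => dif_neg hi), ← sum_attach I]
  exact sum_congr rfl fun i _ => by simp [i.2]

lemma restr_transpose_mulVec (u : Fin n → ℝ) :
    restr I (Aᵀ *ᵥ u) = extendByZero I ((subCols A I)ᵀ *ᵥ u) := by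
  ext i
  by_cases h : i ∈ I <;> simp [restr, extendByZero, h, mulVec, dotProduct, subCols]

lemma aRIP.isUnit_gram (h : aRIP A m L U) (hL : L < 1) (hI : I.card ≤ m) : IsUnit (gram A I) := by
  have hinj : Function.Injective (subCols A I).mulVec := by
    rw [← coe_mulVecLin, injective_iff_map_eq_zero]
    intro z hz
    refine extendByZero_injective
      ((h.eq_zero_of_mulVec_eq_zero hL ?_ ?_).trans extendByZero_zero.symm)
    · exact (card_le_card (supp_extendByZero_subset z)).trans hI
    · rw [← subCols_mulVec]; exact hz
  simpa [_root_.gram, conjTranspose_eq_transpose_of_trivial] using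
    (PosDef.conjTranspose_mul_self _ hinj).isUnit

lemma aRIP.restr_transpose_mulVec_sub_pinvVec (h : aRIP A m L U) (hL : L < 1) (hI : I.card ≤ m)
    (y : Fin n → ℝ) : restr I (Aᵀ *ᵥ (y - A *ᵥ pinvVec A I y)) = 0 := by
  have hG := (isUnit_iff_isUnit_det _).1 (h.isUnit_gram hL hI)
  rw [restr_transpose_mulVec, pinvVec_eq_extendByZero, ← subCols_mulVec, pinvApply, mulVec_sub,
    mulVec_mulVec, mulVec_mulVec, ← Matrix.mul_assoc, ← _root_.gram, mul_nonsing_inv _ hG,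
    Matrix.one_mul, sub_self, extendByZero_zero]

lemma aRIP.dotProduct_mulVec_sub_pinvVec (h : aRIP A m L U) (hL : L < 1) (hI : I.card ≤ m)
    (y : Fin n → ℝ) {w : Fin N → ℝ} (hw : supp w ⊆ I) :
    (A *ᵥ w) ⬝ᵥ (y - A *ᵥ pinvVec A I y) = 0 := by
  rw [dotProduct_comm, ← dotProduct_transpose_mulVec, ← dotProduct_restr_of_supp_subset hw,
    h.restr_transpose_mulVec_sub_pinvVec hL hI, dotProduct_zero]

end LeastSquares

section CoSaMP

variable {n N m₂ m₃ m₄ : ℕ} {A : Matrix (Fin n) (Fin N) ℝ} {L₂ U₂ L₃ U₃ L₄ U₄ : ℝ}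

lemma enormR_sub_pinvVec_le (h₃ : aRIP A m₃ L₃ U₃) (h₄ : aRIP A m₄ L₄ U₄) (hL₃ : L₃ < 1)
    (hLU₄ : 0 ≤ L₄ + U₄) {T : Finset (Fin N)} (hT : T.card ≤ m₃) {x : Fin N → ℝ}
    (hTx : (T ∪ supp x).card ≤ m₄) (e : Fin n → ℝ) :
    enormR (x - pinvVec A T (A *ᵥ x + e)) ≤
      (1 + (L₄ + U₄) / (2 * (1 - L₃))) * enormR (restr Tᶜ x) + enormR e / Real.sqrt (1 - L₃) := by
  set xt := pinvVec A T (A *ᵥ x + e)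
  set w := restr T (x - xt)
  set c := restr Tᶜ x
  have hs : 0 < Real.sqrt (1 - L₃) := Real.sqrt_pos.2 (sub_pos.2 hL₃)
  have hsplit : x - xt = w + c := by
    have hxt : supp xt ⊆ T := supp_extendByZero_subset _
    rw [← restr_add_restr_compl T (x - xt)]
    congr 1
    ext i
    by_cases hi : i ∈ T
    · simp [restr, c, hi]
    · simp [restr, c, hi, supp_subset_iff.1 hxt i hi]
  have hw : supp w ⊆ T := supp_restr_subset _ _
  have hwc : Disjoint (supp w) (supp c) :=
    disjoint_compl_right.mono hw (supp_restr_subset _ _)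
  have hwc4 : (supp w ∪ supp c).card ≤ m₄ :=
    (card_le_card (union_subset_union hw (supp_restr_subset_supp _ _))).trans hTx
  -- `A w` is orthogonal to the residual `A x + e - A xt = A w + A c + e`
  have hAw : enormR (A *ᵥ w) ^ 2 = -((A *ᵥ w) ⬝ᵥ e) - (A *ᵥ w) ⬝ᵥ (A *ᵥ c) := by
    have horth := h₃.dotProduct_mulVec_sub_pinvVec hL₃ hT (A *ᵥ x + e) hw
    have hres : A *ᵥ x + e - A *ᵥ xt = A *ᵥ w + A *ᵥ c + e := by
      rw [← mulVec_add, ← hsplit, mulVec_sub]; abel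
    rw [hres, dotProduct_add, dotProduct_add] at horth
    rw [enormR_sq_eq_dotProduct]
    linarith
  have hlow : Real.sqrt (1 - L₃) * enormR w ≤ enormR (A *ᵥ w) :=
    h₃.sqrt_mul_enormR_le ((card_le_card hw).trans hT)
  have hwle : enormR w ≤ enormR (A *ᵥ w) / Real.sqrt (1 - L₃) := by
    rw [le_div_iff₀ hs]; linarith
  have hAw_le : enormR (A *ᵥ w) ≤ enormR e + (L₄ + U₄) / 2 * enormR c / Real.sqrt (1 - L₃) := by
    have := enormR_nonneg c
    refine le_of_sq_le_mul (by have := enormR_nonneg e; positivity) ?_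
    have he := neg_le_of_abs_le (abs_dotProduct_le (A *ᵥ w) e)
    have hc := neg_le_of_abs_le (h₄.abs_dotProduct_mulVec_le hwc hwc4)
    calc enormR (A *ᵥ w) ^ 2
        ≤ enormR (A *ᵥ w) * enormR e + (L₄ + U₄) / 2 * enormR w * enormR c := by linarith
      _ ≤ enormR (A *ᵥ w) * enormR e
          + (L₄ + U₄) / 2 * (enormR (A *ᵥ w) / Real.sqrt (1 - L₃)) * enormR c := by
          gcongr
      _ = enormR (A *ᵥ w) * (enormR e + (L₄ + U₄) / 2 * enormR c / Real.sqrt (1 - L₃)) := by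
          ring
  calc enormR (x - xt) ≤ enormR w + enormR c := hsplit ▸ enormR_add_le w c
    _ ≤ enormR (A *ᵥ w) / Real.sqrt (1 - L₃) + enormR c := add_le_add_left hwle _
    _ ≤ (enormR e + (L₄ + U₄) / 2 * enormR c / Real.sqrt (1 - L₃)) / Real.sqrt (1 - L₃)
          + enormR c := by gcongr
    _ = (1 + (L₄ + U₄) / (2 * (1 - L₃))) * enormR c + enormR e / Real.sqrt (1 - L₃) := by
        rw [add_div, div_div, ← pow_two, Real.sq_sqrt (sub_pos.2 hL₃).le, div_mul_eq_div_div]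
        ring

lemma enormR_restr_transpose_mulVec_add_le (h₂ : aRIP A m₂ L₂ U₂) (h₄ : aRIP A m₄ L₄ U₄)
    (hLU₄ : 0 ≤ L₄ + U₄) {Q : Finset (Fin N)} {r : Fin N → ℝ} (hQ : Q.card ≤ m₂)
    (hQr : Disjoint Q (supp r)) (hQr4 : (Q ∪ supp r).card ≤ m₄) (e : Fin n → ℝ) :
    enormR (restr Q (Aᵀ *ᵥ (A *ᵥ r + e))) ≤
      (L₄ + U₄) / 2 * enormR r + Real.sqrt (1 + U₂) * enormR e := by
  refine enormR_restr_transpose_mulVec_le (add_nonneg (mul_nonneg (by linarith) (enormR_nonneg r))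
    (mul_nonneg (Real.sqrt_nonneg _) (enormR_nonneg e))) fun w hw => ?_
  have hwr : Disjoint (supp w) (supp r) := hQr.mono_left hw
  have hwr4 : (supp w ∪ supp r).card ≤ m₄ :=
    (card_le_card (union_subset_union hw subset_rfl)).trans hQr4
  calc (A *ᵥ w) ⬝ᵥ (A *ᵥ r + e) = (A *ᵥ w) ⬝ᵥ (A *ᵥ r) + (A *ᵥ w) ⬝ᵥ e := dotProduct_add _ _ _
    _ ≤ (L₄ + U₄) / 2 * enormR w * enormR r + enormR (A *ᵥ w) * enormR e :=
        add_le_add ((le_abs_self _).trans (h₄.abs_dotProduct_mulVec_le hwr hwr4))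
          (dotProduct_le_enormR_mul _ _)
    _ ≤ (L₄ + U₄) / 2 * enormR w * enormR r + Real.sqrt (1 + U₂) * enormR w * enormR e := by
        have := enormR_nonneg e
        gcongr
        exact h₂.enormR_mulVec_le ((card_le_card hw).trans hQ)
    _ = ((L₄ + U₄) / 2 * enormR r + Real.sqrt (1 + U₂) * enormR e) * enormR w := by ring

lemma enormR_restr_compl_le_of_selects (h₂ : aRIP A m₂ L₂ U₂) (h₄ : aRIP A m₄ L₄ U₄)
    (hL₂ : L₂ < 1) (hLU₂ : 0 ≤ L₂ + U₂) (hLU₄ : 0 ≤ L₄ + U₄) {Ω : Finset (Fin N)}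
    {r : Fin N → ℝ} {e : Fin n → ℝ} (hsel : selects Ω (Aᵀ *ᵥ (A *ᵥ r + e)))
    (hr : (supp r).card ≤ Ω.card) (hΩ : Ω.card ≤ m₂) (hΩr : (Ω ∪ supp r).card ≤ m₄) :
    enormR (restr Ωᶜ r) ≤
      ((L₂ + U₂ + L₄ + U₄) / 2 * enormR r + 2 * Real.sqrt (1 + U₂) * enormR e) / (1 - L₂) := by
  set u := Aᵀ *ᵥ (A *ᵥ r + e)
  set p := restr Ωᶜ r
  set q := restr Ω r
  have hp : supp p ⊆ supp r \ Ω := by rw [supp_restr, sdiff_eq_inter_compl]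
  have hp2 : sparse m₂ p := ((card_le_card (supp_restr_subset_supp _ _)).trans hr).trans hΩ
  -- the part of `u` on the missed support is dominated by the part on `Ω \ supp r`
  have hpu : p ⬝ᵥ u ≤ enormR p * ((L₄ + U₄) / 2 * enormR r + Real.sqrt (1 + U₂) * enormR e) := by
    have hsdiff : enormR (restr (supp r \ Ω) u) ≤ enormR (restr (Ω \ supp r) u) := by
      rw [← sq_le_sq₀ (enormR_nonneg _) (enormR_nonneg _), enormR_sq_restr, enormR_sq_restr]
      exact sum_sq_sdiff_le_of_selects hsel hr
    have hQ : enormR (restr (Ω \ supp r) u) ≤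
        (L₄ + U₄) / 2 * enormR r + Real.sqrt (1 + U₂) * enormR e :=
      enormR_restr_transpose_mulVec_add_le h₂ h₄ hLU₄ ((card_le_card sdiff_subset).trans hΩ)
        sdiff_disjoint ((card_le_card (union_subset_union sdiff_subset subset_rfl)).trans hΩr) e
    calc p ⬝ᵥ u = p ⬝ᵥ restr (supp r \ Ω) u := (dotProduct_restr_of_supp_subset hp u).symm
      _ ≤ enormR p * enormR (restr (supp r \ Ω) u) := dotProduct_le_enormR_mul _ _
      _ ≤ _ := mul_le_mul_of_nonneg_left (hsdiff.trans hQ) (enormR_nonneg p)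
  have hpq : |(A *ᵥ p) ⬝ᵥ (A *ᵥ q)| ≤ (L₂ + U₂) / 2 * enormR p * enormR q := by
    refine h₂.abs_dotProduct_mulVec_le
      (disjoint_compl_left.mono (supp_restr_subset _ _) (supp_restr_subset _ _)) ?_
    exact (card_le_card (union_subset (supp_restr_subset_supp _ _)
      (supp_restr_subset_supp _ _))).trans (hr.trans hΩ)
  have hpe : |(A *ᵥ p) ⬝ᵥ e| ≤ Real.sqrt (1 + U₂) * enormR p * enormR e :=
    (abs_dotProduct_le _ _).trans
      (mul_le_mul_of_nonneg_right (h₂.enormR_mulVec_le hp2) (enormR_nonneg e))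
  have hAp : enormR (A *ᵥ p) ^ 2 = p ⬝ᵥ u - (A *ᵥ p) ⬝ᵥ e - (A *ᵥ p) ⬝ᵥ (A *ᵥ q) := by
    have hr : A *ᵥ r + e = A *ᵥ p + A *ᵥ q + e := by
      rw [← mulVec_add, add_comm p q, restr_add_restr_compl]
    rw [dotProduct_transpose_mulVec, dotProduct_comm, hr, enormR_sq_eq_dotProduct]
    simp only [dotProduct_add]
    ring
  have hpq' : (L₂ + U₂) / 2 * enormR p * enormR q ≤ (L₂ + U₂) / 2 * enormR p * enormR r :=
    mul_le_mul_of_nonneg_left (enormR_restr_le _ _)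
      (mul_nonneg (by linarith) (enormR_nonneg p))
  have hmain : (1 - L₂) * enormR p ^ 2 ≤ enormR p *
      ((L₂ + U₂ + L₄ + U₄) / 2 * enormR r + 2 * Real.sqrt (1 + U₂) * enormR e) := by
    nlinarith [(h₂ p hp2).1, abs_le.1 hpq, abs_le.1 hpe]
  rw [le_div_iff₀ (sub_pos.2 hL₂), mul_comm]
  refine le_of_sq_le_mul (add_nonneg (mul_nonneg (by linarith) (enormR_nonneg r))
    (mul_nonneg (by positivity) (enormR_nonneg e))) ?_
  nlinarith [mul_le_mul_of_nonneg_left hmain (sub_pos.2 hL₂).le]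

lemma cosamp_step_le {k : ℕ} (h₂ : aRIP A (2 * k) L₂ U₂) (h₃ : aRIP A (3 * k) L₃ U₃)
    (h₄ : aRIP A (4 * k) L₄ U₄) (hL₂ : L₂ < 1) (hL₃ : L₃ < 1) (hLU₂ : 0 ≤ L₂ + U₂)
    (hLU₄ : 0 ≤ L₄ + U₄) {μ ξ : ℝ}
    (hμ : μ = (1 / 2) * (2 + (L₄ + U₄) / (1 - L₃)) * ((L₂ + U₂ + L₄ + U₄) / (1 - L₂)))
    (hξ : ξ = 2 * ((2 + (L₄ + U₄) / (1 - L₃)) * (Real.sqrt (1 + U₂) / (1 - L₂))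
      + (Real.sqrt (1 - L₃))⁻¹))
    {x v : Fin N → ℝ} (hx : sparse k x) (hv : sparse k v) {e : Fin n → ℝ}
    {Ω T : Finset (Fin N)} (hΩcard : Ω.card = 2 * k)
    (hΩsel : selects Ω (Aᵀ *ᵥ (A *ᵥ x + e - A *ᵥ v))) (hTcard : T.card = k)
    (hTsel : selects T (pinvVec A (supp v ∪ Ω) (A *ᵥ x + e))) :
    enormR (x - restr T (pinvVec A (supp v ∪ Ω) (A *ᵥ x + e))) ≤
      μ * enormR (x - v) + ξ * enormR e := by
  set Tt := supp v ∪ Ω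
  set r := x - v
  rw [sparse_iff_card_supp_le] at hx hv
  have hr : (supp r).card ≤ 2 * k := (card_le_card (supp_sub_subset x v)).trans
    ((card_union_le _ _).trans (by omega))
  have hTt : Tt.card ≤ 3 * k := (card_union_le _ _).trans (by omega)
  have hTtx : (Tt ∪ supp x).card ≤ 4 * k := (card_union_le _ _).trans (by omega)
  have hΩr : (Ω ∪ supp r).card ≤ 4 * k := (card_union_le _ _).trans (by omega)
  have hu : A *ᵥ x + e - A *ᵥ v = A *ᵥ r + e := by rw [mulVec_sub]; abel
  rw [hu] at hΩsel
  have hid := enormR_restr_compl_le_of_selects h₂ h₄ hL₂ hLU₂ hLU₄ hΩsel (hr.trans hΩcard.ge)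
    hΩcard.le hΩr
  -- `v` vanishes off `Tt ⊇ Ω`, so the part of `x` missed by `Tt` is part of `r` missed by `Ω`
  have hmissed : enormR (restr Ttᶜ x) ≤ enormR (restr Ωᶜ r) := by
    have : restr Ttᶜ x = restr Ttᶜ (restr Ωᶜ r) := by
      ext i
      by_cases hi : i ∈ Tt
      · simp [restr, hi]
      · have hiv : i ∉ supp v := fun h => hi (mem_union_left _ h)
        have hiΩ : i ∉ Ω := fun h => hi (mem_union_right _ h)
        simp [restr, hi, hiΩ, r, mem_supp.not_left.1 hiv]
    rw [this]
    exact enormR_restr_le _ _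
  have hest := enormR_sub_pinvVec_le h₃ h₄ hL₃ hLU₄ hTt hTtx e
  have hd : 0 ≤ 1 + (L₄ + U₄) / (2 * (1 - L₃)) :=
    add_nonneg zero_le_one (div_nonneg hLU₄ (by linarith))
  calc enormR (x - restr T (pinvVec A Tt (A *ᵥ x + e)))
      ≤ 2 * enormR (x - pinvVec A Tt (A *ᵥ x + e)) :=
        enormR_sub_restr_le_two_mul_of_selects hTsel (hTcard ▸ hx)
    _ ≤ 2 * ((1 + (L₄ + U₄) / (2 * (1 - L₃))) *
          (((L₂ + U₂ + L₄ + U₄) / 2 * enormR r + 2 * Real.sqrt (1 + U₂) * enormR e) / (1 - L₂))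
          + enormR e / Real.sqrt (1 - L₃)) := by
        gcongr
        exact hest.trans (by gcongr; exact hmissed.trans hid)
    _ = μ * enormR r + ξ * enormR e := by
        have : Real.sqrt (1 - L₃) ≠ 0 := (Real.sqrt_pos.2 (sub_pos.2 hL₃)).ne'
        have : 1 - L₂ ≠ 0 := (sub_pos.2 hL₂).ne'
        have : 1 - L₃ ≠ 0 := (sub_pos.2 hL₃).ne'
        rw [hμ, hξ]
        field_simp
        ring

end CoSaMP

lemma le_pow_mul_add_div_of_le_mul_add {a : ℕ → ℝ} {μ c : ℝ} (hμ0 : 0 ≤ μ) (hμ1 : μ < 1)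
    (hc : 0 ≤ c) (h : ∀ l, a (l + 1) ≤ μ * a l + c) (l : ℕ) :
    a l ≤ μ ^ l * a 0 + c / (1 - μ) := by
  induction l with
  | zero => simpa using div_nonneg hc (sub_pos.2 hμ1).le
  | succ l ih =>
    calc a (l + 1) ≤ μ * a l + c := h l
      _ ≤ μ * (μ ^ l * a 0 + c / (1 - μ)) + c := by gcongr
      _ = μ ^ (l + 1) * a 0 + c / (1 - μ) := by
          field_simp [(sub_pos.2 hμ1).ne']
          ring

theorem stmt13_general {n N k : ℕ} (A : Matrix (Fin n) (Fin N) ℝ)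
    (L₂ U₂ L₃ U₃ L₄ U₄ : ℝ)
    (hL₂0 : 0 ≤ L₂) (hU₂0 : 0 ≤ U₂)
    (hL₄0 : 0 ≤ L₄) (hU₄0 : 0 ≤ U₄)
    (h₂ : aRIP A (2 * k) L₂ U₂) (h₃ : aRIP A (3 * k) L₃ U₃) (h₄ : aRIP A (4 * k) L₄ U₄)
    (hL₂1 : L₂ < 1) (hL₃1 : L₃ < 1)
    (μ ξ : ℝ)
    (hμ : μ = (1 / 2) * (2 + (L₄ + U₄) / (1 - L₃)) * ((L₂ + U₂ + L₄ + U₄) / (1 - L₂)))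
    (hξ : ξ = 2 * ((2 + (L₄ + U₄) / (1 - L₃)) * (Real.sqrt (1 + U₂) / (1 - L₂))
      + (Real.sqrt (1 - L₃))⁻¹))
    (hμ1 : μ < 1)
    (x : Fin N → ℝ) (hx : sparse k x) (e y : Fin n → ℝ)
    (hy : y = fun i => A.mulVec x i + e i)
    (v : ℕ → Fin N → ℝ) (Ω Tt Ts : ℕ → Finset (Fin N)) (xt : ℕ → Fin N → ℝ)
    (hv0 : v 0 = 0)
    (hΩcard : ∀ l : ℕ, (Ω (l + 1)).card = 2 * k)
    (hΩsel : ∀ l : ℕ, selects (Ω (l + 1)) (Aᵀ.mulVec (fun i => y i - A.mulVec (v l) i)))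
    (hTt : ∀ l : ℕ, Tt (l + 1) = (Finset.univ.filter fun i => v l i ≠ 0) ∪ Ω (l + 1))
    (hxt : ∀ l : ℕ, xt (l + 1) = pinvVec A (Tt (l + 1)) y)
    (hTscard : ∀ l : ℕ, (Ts (l + 1)).card = k)
    (hTssel : ∀ l : ℕ, selects (Ts (l + 1)) (xt (l + 1)))
    (hvsucc : ∀ l : ℕ, v (l + 1) = restr (Ts (l + 1)) (xt (l + 1))) :
    ∀ l : ℕ, enormR (fun i => x i - v l i) ≤
      μ ^ l * enormR x + (ξ / (1 - μ)) * enormR e := by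
  obtain rfl : y = A *ᵥ x + e := hy
  have hLU₂ : 0 ≤ L₂ + U₂ := by linarith
  have hLU₄ : 0 ≤ L₄ + U₄ := by linarith
  have hμ0 : 0 ≤ μ := by
    rw [hμ]
    have := div_nonneg hLU₄ (sub_pos.2 hL₃1).le
    have := div_nonneg (add_nonneg hLU₂ hLU₄) (sub_pos.2 hL₂1).le
    positivity
  have hξ0 : 0 ≤ ξ := by
    rw [hξ]
    have := div_nonneg hLU₄ (sub_pos.2 hL₃1).le
    have := div_nonneg (Real.sqrt_nonneg (1 + U₂)) (sub_pos.2 hL₂1).le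
    positivity
  have hsparse : ∀ l, sparse k (v l)
    | 0 => by simp [hv0, sparse]
    | l + 1 => hvsucc l ▸ (card_le_card (supp_restr_subset _ _)).trans (hTscard l).le
  have hstep : ∀ l, enormR (x - v (l + 1)) ≤ μ * enormR (x - v l) + ξ * enormR e := fun l => by
    rw [hvsucc, hxt, hTt]
    exact cosamp_step_le h₂ h₃ h₄ hL₂1 hL₃1 hLU₂ hLU₄ hμ hξ hx (hsparse l)
      (hΩcard l) (hΩsel l) (hTscard l) (hTt l ▸ hxt l ▸ hTssel l)
  intro l
  show enormR (x - v l) ≤ _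
  simpa only [hv0, sub_zero, mul_div_right_comm] using
    le_pow_mul_add_div_of_le_mul_add (a := fun l => enormR (x - v l)) hμ0 hμ1
      (mul_nonneg hξ0 (enormR_nonneg e)) hstep l

theorem stmt13 {n N k : ℕ} (A : Matrix (Fin n) (Fin N) ℝ)
    (L₂ U₂ L₃ U₃ L₄ U₄ : ℝ)
    (hL₂0 : 0 ≤ L₂) (hU₂0 : 0 ≤ U₂) (hL₃0 : 0 ≤ L₃) (hU₃0 : 0 ≤ U₃)
    (hL₄0 : 0 ≤ L₄) (hU₄0 : 0 ≤ U₄)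
    (h₂ : aRIP A (2 * k) L₂ U₂) (h₃ : aRIP A (3 * k) L₃ U₃) (h₄ : aRIP A (4 * k) L₄ U₄)
    (hL₂1 : L₂ < 1) (hL₃1 : L₃ < 1)
    (μ ξ : ℝ)
    (hμ : μ = (1 / 2) * (2 + (L₄ + U₄) / (1 - L₃)) * ((L₂ + U₂ + L₄ + U₄) / (1 - L₂)))
    (hξ : ξ = 2 * ((2 + (L₄ + U₄) / (1 - L₃)) * (Real.sqrt (1 + U₂) / (1 - L₂))
      + (Real.sqrt (1 - L₃))⁻¹))
    (hμ1 : μ < 1)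
    (x : Fin N → ℝ) (hx : sparse k x) (e y : Fin n → ℝ)
    (hy : y = fun i => A.mulVec x i + e i)
    (v : ℕ → Fin N → ℝ) (Ω Tt Ts : ℕ → Finset (Fin N)) (xt : ℕ → Fin N → ℝ)
    (hv0 : v 0 = 0)
    (hΩcard : ∀ l : ℕ, (Ω (l + 1)).card = 2 * k)
    (hΩsel : ∀ l : ℕ, selects (Ω (l + 1)) (Aᵀ.mulVec (fun i => y i - A.mulVec (v l) i)))
    (hTt : ∀ l : ℕ, Tt (l + 1) = (Finset.univ.filter fun i => v l i ≠ 0) ∪ Ω (l + 1))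
    (hxt : ∀ l : ℕ, xt (l + 1) = pinvVec A (Tt (l + 1)) y)
    (hTscard : ∀ l : ℕ, (Ts (l + 1)).card = k)
    (hTssel : ∀ l : ℕ, selects (Ts (l + 1)) (xt (l + 1)))
    (hvsucc : ∀ l : ℕ, v (l + 1) = restr (Ts (l + 1)) (xt (l + 1))) :
    ∀ l : ℕ, enormR (fun i => x i - v l i) ≤
      μ ^ l * enormR x + (ξ / (1 - μ)) * enormR e :=
  stmt13_general A L₂ U₂ L₃ U₃ L₄ U₄ hL₂0 hU₂0 hL₄0 hU₄0 h₂ h₃ h₄ hL₂1 hL₃1 μ ξ hμ hξ hμ1 x hx e y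
    hy v Ω Tt Ts xt hv0 hΩcard hΩsel hTt hxt hTscard hTssel hvsucc
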